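/- arXiv:1510.07440 — 16 statements merged into one kernel-verified Lean document; each statement's English description precedes it below -/
import Mathlib

section
/- Let R and T be rings with unity and let f : R → T be a surjective ring homomorphism. If R is a weak nil clean ring, then T is a weak nil clean ring. -/
/-- A ring is weak nil clean if every element is the sum or difference of a
nilpotent and an idempotent. -/
def WeakNilClean (R : Type*) [Ring R] : Prop :=
  ∀ x : R, ∃ n e : R, IsNilpotent n ∧ IsIdempotentElem e ∧ (x = n + e ∨ x = n - e)

theorem WeakNilClean.of_surjective {R T F : Type*} [Ring R] [Ring T] [FunLike F R T]
    [RingHomClass F R T] (f : F) (hf : Function.Surjective f) (hR : WeakNilClean R) :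
    WeakNilClean T := by
  intro x
  obtain ⟨r, rfl⟩ := hf x
  obtain ⟨n, e, hn, he, hr⟩ := hR r
  refine ⟨f n, f e, hn.map f, he.map f, ?_⟩
  rcases hr with rfl | rfl
  · exact .inl (map_add f n e)
  · exact .inr (map_sub f n e)

theorem stmt_0 {R T : Type*} [Ring R] [Ring T] (f : R →+* T)
    (hf : Function.Surjective f) (hR : WeakNilClean R) : WeakNilClean T :=
  hR.of_surjective f hf
end

section
/- Let {R_i}_{i ∈ I} be a finite family of rings with unity. The direct product R = Π_{i ∈ I} R_i is a weak nil clean ring if and only if each R_i is weak nil clean and there is at most one index i ∈ I such that R_i is not nil clean. -/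
/-- A ring is nil clean if every element is the sum of a nilpotent and an idempotent. -/
def NilClean (R : Type*) [Ring R] : Prop :=
  ∀ x : R, ∃ n e : R, IsNilpotent n ∧ IsIdempotentElem e ∧ x = n + e

def IsNilCleanElem {R : Type*} [Ring R] (x : R) : Prop :=
  ∃ n e : R, IsNilpotent n ∧ IsIdempotentElem e ∧ x = n + e

section Ring

variable {R S : Type*} [Ring R] [Ring S]

theorem IsNilCleanElem.map {x : R} (hx : IsNilCleanElem x) (f : R →+* S) :
    IsNilCleanElem (f x) := by
  obtain ⟨n, e, hn, he, rfl⟩ := hx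
  exact ⟨f n, f e, hn.map f, he.map f, map_add f n e⟩

theorem isNilCleanElem_neg_iff {x : R} :
    IsNilCleanElem (-x) ↔ ∃ n e : R, IsNilpotent n ∧ IsIdempotentElem e ∧ x = n - e := by
  constructor
  · rintro ⟨n, e, hn, he, hx⟩
    exact ⟨-n, e, hn.neg, he, by rw [← neg_neg x, hx]; abel⟩
  · rintro ⟨n, e, hn, he, rfl⟩
    exact ⟨-n, e, hn.neg, he, by abel⟩

theorem nilClean_iff : NilClean R ↔ ∀ x : R, IsNilCleanElem x := Iff.rfl

theorem weakNilClean_iff : WeakNilClean R ↔ ∀ x : R, IsNilCleanElem x ∨ IsNilCleanElem (-x) := by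
  refine forall_congr' fun x => ?_
  rw [isNilCleanElem_neg_iff]
  simp only [IsNilCleanElem, ← exists_or, ← and_or_left]

theorem WeakNilClean.of_surjective_s1 (h : WeakNilClean R) (f : R →+* S)
    (hf : Function.Surjective f) : WeakNilClean S := by
  refine weakNilClean_iff.mpr fun y => ?_
  obtain ⟨x, rfl⟩ := hf y
  rw [← map_neg]
  exact (weakNilClean_iff.mp h x).imp (·.map f) (·.map f)

end Ring

namespace Pi

variable {I : Type*} {R : I → Type*} [∀ i, Ring (R i)]

theorem isNilpotent_of_forall [Finite I] {x : ∀ i, R i} (h : ∀ i, IsNilpotent (x i)) :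
    IsNilpotent x := by
  cases nonempty_fintype I
  choose k hk using h
  refine ⟨Finset.univ.sup k, funext fun i => ?_⟩
  obtain ⟨m, hm⟩ := Nat.exists_eq_add_of_le (Finset.le_sup (Finset.mem_univ i) : k i ≤ _)
  rw [pow_apply, hm, pow_add, hk i, zero_mul, zero_apply]

theorem isNilCleanElem_iff [Finite I] {x : ∀ i, R i} :
    IsNilCleanElem x ↔ ∀ i, IsNilCleanElem (x i) := by
  refine ⟨fun hx i => hx.map (evalRingHom R i), fun hx => ?_⟩
  choose n e hn he hx using hx
  exact ⟨n, e, isNilpotent_of_forall hn, funext he, funext hx⟩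

theorem subsingleton_setOf_not_nilClean (h : WeakNilClean (∀ i, R i)) :
    {i | ¬ NilClean (R i)}.Subsingleton := by
  classical
  intro i hi j hj
  by_contra hij
  rw [Set.mem_ofPred_eq, nilClean_iff, not_forall] at hi hj
  obtain ⟨a, ha⟩ := hi
  obtain ⟨b, hb⟩ := hj
  obtain hx | hx := weakNilClean_iff.mp h (Function.update (Function.update 0 i a) j (-b))
  · apply ha
    simpa [Function.update_of_ne hij] using hx.map (evalRingHom R i)
  · apply hb
    simpa using hx.map (evalRingHom R j)

theorem weakNilClean [Finite I] (hw : ∀ i, WeakNilClean (R i))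
    (hs : {i | ¬ NilClean (R i)}.Subsingleton) : WeakNilClean (∀ i, R i) := by
  refine weakNilClean_iff.mpr fun x => ?_
  by_cases hall : ∀ i, IsNilCleanElem (x i)
  · exact .inl (isNilCleanElem_iff.mpr hall)
  obtain ⟨j, hj⟩ := not_forall.mp hall
  refine .inr (isNilCleanElem_iff.mpr fun i => ?_)
  by_cases hi : NilClean (R i)
  · exact hi (-x i)
  obtain rfl : i = j := hs hi fun hRj => hj (hRj (x j))
  exact (weakNilClean_iff.mp (hw i) (x i)).resolve_left hj

end Pi

theorem stmt_1 {I : Type*} [Finite I] (R : I → Type*) [∀ i, Ring (R i)] :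
    WeakNilClean (∀ i, R i) ↔
      (∀ i, WeakNilClean (R i)) ∧ {i | ¬ NilClean (R i)}.Subsingleton :=
  ⟨fun h => ⟨fun i => h.of_surjective_s1 (Pi.evalRingHom R i) (Function.surjective_eval i),
      Pi.subsingleton_setOf_not_nilClean h⟩,
    fun ⟨hw, hs⟩ => Pi.weakNilClean hw hs⟩
end

section
/- If R is a weak nil clean ring, then the Jacobson radical J(R) is contained in the set of nilpotent elements of R; that is, every element of J(R) is nilpotent. -/
namespace IsIdempotentElem

variable {R : Type*} [Ring R] {e : R}

theorem eq_zero_of_mem_jacobson_bot (he : IsIdempotentElem e)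
    (hJ : e ∈ Ideal.jacobson (⊥ : Ideal R)) : e = 0 := by
  obtain ⟨z, hz⟩ := Ideal.mem_jacobson_iff.1 hJ (-1)
  have hinv : z * (1 - e) = 1 := by
    rw [Ideal.mem_bot, sub_eq_zero] at hz
    rw [mul_sub, mul_one, ← hz]; noncomm_ring
  calc e = z * (1 - e) * e := by rw [hinv, one_mul]
    _ = z * (e - e * e) := by noncomm_ring
    _ = 0 := by rw [he.eq, sub_self, mul_zero]

theorem mem_of_sub_mem_of_isNilpotent {I : Ideal R} [I.IsTwoSided] {n : R}
    (he : IsIdempotentElem e) (hn : IsNilpotent n) (h : e - n ∈ I) : e ∈ I := by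
  rw [← Ideal.Quotient.eq_zero_iff_mem]
  have hen : Ideal.Quotient.mk I e = Ideal.Quotient.mk I n := Ideal.Quotient.eq.2 h
  exact (he.map (Ideal.Quotient.mk I)).eq_zero_of_isNilpotent (hen ▸ hn.map _)

end IsIdempotentElem

theorem stmt_2 {R : Type*} [Ring R] (hR : WeakNilClean R) :
    ∀ x ∈ Ideal.jacobson (⊥ : Ideal R), IsNilpotent x := by
  intro x hx
  obtain ⟨n, e, hn, he, hx_eq⟩ := hR x
  have he0 : e = 0 := by
    refine he.eq_zero_of_mem_jacobson_bot ?_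
    rcases hx_eq with rfl | rfl
    · exact he.mem_of_sub_mem_of_isNilpotent hn.neg (by rwa [sub_neg_eq_add, add_comm])
    · exact he.mem_of_sub_mem_of_isNilpotent hn (by rw [← neg_sub]; exact neg_mem hx)
  rcases hx_eq with rfl | rfl <;> simpa [he0] using hn
end

section
/- Let R be a commutative ring with unity such that the quotient ring R/Nil(R) by the nilradical is weak nil clean and idempotents lift modulo Nil(R) (i.e., for every y ∈ R with y² - y ∈ Nil(R) there exists an idempotent e ∈ R with y - e ∈ Nil(R)). Then R is weak nil clean. -/
section

variable {R S : Type*} [Ring R] [Ring S] {f : R →+* S}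

theorem IsNilpotent.of_map_of_ker_isNilpotent (hf : ∀ x ∈ RingHom.ker f, IsNilpotent x) {r : R}
    (hr : IsNilpotent (f r)) : IsNilpotent r := by
  obtain ⟨k, hk⟩ := hr
  exact IsNilpotent.of_pow (hf _ (by rwa [RingHom.mem_ker, map_pow]))

theorem WeakNilClean.of_surjective_of_ker_isNilpotent (hS : WeakNilClean S)
    (hsurj : Function.Surjective f) (hf : ∀ x ∈ RingHom.ker f, IsNilpotent x) :
    WeakNilClean R := by
  intro x
  obtain ⟨n, e, hn, he, hx⟩ := hS (f x)
  obtain ⟨e', he', rfl⟩ := exists_isIdempotentElem_eq_of_ker_isNilpotent f hf e (hsurj e) he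
  rcases hx with hx | hx
  · refine ⟨x - e', e', .of_map_of_ker_isNilpotent hf ?_, he', .inl (sub_add_cancel x e').symm⟩
    rwa [map_sub, hx, add_sub_cancel_right]
  · refine ⟨x + e', e', .of_map_of_ker_isNilpotent hf ?_, he', .inr (add_sub_cancel_right x e').symm⟩
    rwa [map_add, hx, sub_add_cancel]

end

theorem stmt_3_general {R : Type*} [CommRing R]
    (hq : WeakNilClean (R ⧸ nilradical R)) :
    WeakNilClean R :=
  hq.of_surjective_of_ker_isNilpotent Ideal.Quotient.mk_surjective fun _ hx =>
    mem_nilradical.mp (Ideal.mk_ker (I := nilradical R) ▸ hx)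

theorem stmt_3 {R : Type*} [CommRing R]
    (hq : WeakNilClean (R ⧸ nilradical R))
    (hlift : ∀ y : R, y ^ 2 - y ∈ nilradical R →
      ∃ e : R, IsIdempotentElem e ∧ y - e ∈ nilradical R) :
    WeakNilClean R :=
  stmt_3_general hq
end

section
/- Let R be a commutative ring with unity and M an R-module, and let R(M) = R ⊕ M denote the idealization (trivial square-zero extension) of R and M, with multiplication (r,m)(r',m') = (rr', rm' + r'm). Then R is weak nil clean if and only if R(M) is weak nil clean. -/
namespace WeakNilClean

variable {R S : Type*} [Ring R] [Ring S]

theorem of_surjective_s4 (f : R →+* S) (hf : Function.Surjective f) (h : WeakNilClean R) :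
    WeakNilClean S := by
  intro s
  obtain ⟨r, rfl⟩ := hf s
  obtain ⟨n, e, hn, he, hr⟩ := h r
  refine ⟨f n, f e, hn.map f, he.map f, ?_⟩
  rcases hr with rfl | rfl
  · exact Or.inl (map_add f n e)
  · exact Or.inr (map_sub f n e)

theorem of_rightInverse_of_isNilpotent (f : S →+* R) (g : R →+* S)
    (hfg : Function.RightInverse g f) (hnil : ∀ s, IsNilpotent (f s) → IsNilpotent s)
    (h : WeakNilClean R) : WeakNilClean S := by
  intro s
  obtain ⟨n, e, hn, he, hs⟩ := h (f s)
  rcases hs with hs | hs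
  · refine ⟨s - g e, g e, hnil _ ?_, he.map g, Or.inl (sub_add_cancel s (g e)).symm⟩
    rwa [map_sub, hfg, hs, add_sub_cancel_right]
  · refine ⟨s + g e, g e, hnil _ ?_, he.map g, Or.inr (add_sub_cancel_right s (g e)).symm⟩
    rwa [map_add, hfg, hs, sub_add_cancel]

end WeakNilClean

namespace TrivSqZeroExt

theorem isNilpotent_of_isNilpotent_fst {R M : Type*} [Semiring R] [AddCommMonoid M]
    [Module R M] [Module Rᵐᵒᵖ M] [SMulCommClass R Rᵐᵒᵖ M] {x : TrivSqZeroExt R M}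
    (hx : IsNilpotent x.fst) : IsNilpotent x := by
  obtain ⟨k, hk⟩ := hx
  have hxk : x ^ k = inr (x ^ k).snd := by
    rw [← inl_fst_add_inr_snd_eq (x ^ k), fst_pow, hk, inl_zero, zero_add, snd_inr]
  refine ⟨2 * k, ?_⟩
  rw [pow_mul', sq, hxk, inr_mul_inr]

end TrivSqZeroExt

/-- The idealization `R(M) = R ⊕ M` of a commutative ring `R` and an `R`-module `M`
is the trivial square-zero extension `TrivSqZeroExt R M`, whose multiplication is
`(r, m) * (r', m') = (r * r', r • m' + r' • m)`. -/
theorem stmt_4 {R : Type*} [CommRing R] (M : Type*) [AddCommGroup M] [Module R M]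
    [Module Rᵐᵒᵖ M] [IsCentralScalar R M] :
    WeakNilClean R ↔ WeakNilClean (TrivSqZeroExt R M) :=
  ⟨WeakNilClean.of_rightInverse_of_isNilpotent (TrivSqZeroExt.fstHom R R M).toRingHom
      (TrivSqZeroExt.inlHom R M) (TrivSqZeroExt.fst_inl M)
      fun _ => TrivSqZeroExt.isNilpotent_of_isNilpotent_fst,
    WeakNilClean.of_surjective_s4 (TrivSqZeroExt.fstHom R R M).toRingHom
      fun r => ⟨TrivSqZeroExt.inl r, TrivSqZeroExt.fst_inl M r⟩⟩
end

section
/- Let p be a prime number and k ≥ 1 a natural number. The ring ℤ/p^kℤ of integers modulo p^k is weak nil clean but not nil clean if and only if p = 3. -/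
/-!
Reduction `ZMod (p ^ k) → ZMod p` is surjective with nil kernel `pℤ/p^kℤ`. In the field `ZMod p`
nilpotents vanish and idempotents are `0` or `1`; conversely an element lying over `c` differs from
`c` by a nilpotent. So `ZMod (p ^ k)` is nil clean iff every residue mod `p` is `0` or `1`, that is
`p = 2`, and weak nil clean iff every residue is `0` or `±1`, that is `p = 2` or `p = 3`.
-/

section NilKernel

variable {R K : Type*} [Ring R] [Ring K] {f : R →+* K}

theorem isNilpotent_sub_of_map_eq (hker : ∀ x, f x = 0 → IsNilpotent x) {x y : R}
    (h : f x = f y) : IsNilpotent (x - y) :=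
  hker _ (by rw [map_sub, h, sub_self])

theorem IsIdempotentElem.map_eq_zero_or_one [IsDomain K] {e : R} (he : IsIdempotentElem e) :
    f e = 0 ∨ f e = 1 :=
  IsIdempotentElem.iff_eq_zero_or_one.mp (he.map f)

theorem nilClean_iff_forall_eq_zero_or_one [IsDomain K] (hf : Function.Surjective f)
    (hker : ∀ x, f x = 0 → IsNilpotent x) : NilClean R ↔ ∀ y : K, y = 0 ∨ y = 1 := by
  constructor
  · intro h y
    obtain ⟨x, rfl⟩ := hf y
    obtain ⟨n, e, hn, he, rfl⟩ := h x
    rw [map_add, (hn.map f).eq_zero, zero_add]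
    exact he.map_eq_zero_or_one
  · intro h x
    rcases h (f x) with h0 | h1
    · exact ⟨x - 0, 0, isNilpotent_sub_of_map_eq hker (by rw [h0, map_zero]), .zero,
        (sub_add_cancel x 0).symm⟩
    · exact ⟨x - 1, 1, isNilpotent_sub_of_map_eq hker (by rw [h1, map_one]), .one,
        (sub_add_cancel x 1).symm⟩

theorem weakNilClean_iff_forall_eq_zero_or_one_or_neg_one [IsDomain K]
    (hf : Function.Surjective f) (hker : ∀ x, f x = 0 → IsNilpotent x) :
    WeakNilClean R ↔ ∀ y : K, y = 0 ∨ y = 1 ∨ y = -1 := by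
  constructor
  · intro h y
    obtain ⟨x, rfl⟩ := hf y
    obtain ⟨n, e, hn, he, rfl | rfl⟩ := h x <;>
      rcases he.map_eq_zero_or_one (f := f) with he' | he' <;>
      simp [(hn.map f).eq_zero, he']
  · intro h x
    rcases h (f x) with h0 | h1 | hneg
    · exact ⟨x - 0, 0, isNilpotent_sub_of_map_eq hker (by rw [h0, map_zero]), .zero,
        .inl (sub_add_cancel x 0).symm⟩
    · exact ⟨x - 1, 1, isNilpotent_sub_of_map_eq hker (by rw [h1, map_one]), .one,
        .inl (sub_add_cancel x 1).symm⟩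
    · exact ⟨x - -1, 1, isNilpotent_sub_of_map_eq hker (by rw [hneg, map_neg, map_one]), .one,
        .inr (by rw [sub_neg_eq_add, add_sub_cancel_right])⟩

end NilKernel

namespace ZMod

theorem isNilpotent_of_castHom_eq_zero {m n k : ℕ} (hnm : n ∣ m) (hmn : m ∣ n ^ k) {x : ZMod m}
    (hx : castHom hnm (ZMod n) x = 0) : IsNilpotent x := by
  rw [← intCast_zmod_cast x] at hx ⊢
  rw [map_intCast, intCast_zmod_eq_zero_iff_dvd] at hx
  refine ⟨k, ?_⟩
  rw [← Int.cast_pow, intCast_zmod_eq_zero_iff_dvd]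
  exact (Int.natCast_dvd_natCast.mpr hmn).trans (by push_cast; exact pow_dvd_pow_of_dvd hx k)

variable {p : ℕ} [Fact p.Prime]

theorem eq_of_prime_natCast_eq_zero {q : ℕ} (hq : q.Prime) (h : (q : ZMod p) = 0) : p = q :=
  (Nat.prime_dvd_prime_iff_eq Fact.out hq).mp ((natCast_eq_zero_iff q p).mp h)

theorem forall_eq_zero_or_one_iff : (∀ y : ZMod p, y = 0 ∨ y = 1) ↔ p = 2 := by
  refine ⟨fun h => ?_, by rintro rfl; decide +revert⟩
  rcases h 2 with h2 | h2
  · exact eq_of_prime_natCast_eq_zero Nat.prime_two (mod_cast h2)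
  · exact absurd (by linear_combination h2) (one_ne_zero (α := ZMod p))

theorem forall_eq_zero_or_one_or_neg_one_iff :
    (∀ y : ZMod p, y = 0 ∨ y = 1 ∨ y = -1) ↔ p = 2 ∨ p = 3 := by
  refine ⟨fun h => ?_, by rintro (rfl | rfl) <;> decide +revert⟩
  rcases h 2 with h2 | h2 | h2
  · exact .inl (eq_of_prime_natCast_eq_zero Nat.prime_two (mod_cast h2))
  · exact absurd (by linear_combination h2) (one_ne_zero (α := ZMod p))
  · exact .inr (eq_of_prime_natCast_eq_zero Nat.prime_three (by push_cast; linear_combination h2))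

end ZMod

theorem stmt_6 (p : ℕ) (hp : p.Prime) (k : ℕ) (hk : 1 ≤ k) :
    (WeakNilClean (ZMod (p ^ k)) ∧ ¬ NilClean (ZMod (p ^ k))) ↔ p = 3 := by
  have := Fact.mk hp
  have hdvd : p ∣ p ^ k := dvd_pow_self p (by omega)
  have hker (x : ZMod (p ^ k)) := ZMod.isNilpotent_of_castHom_eq_zero hdvd dvd_rfl (x := x)
  rw [weakNilClean_iff_forall_eq_zero_or_one_or_neg_one (ZMod.castHom_surjective hdvd) hker,
    nilClean_iff_forall_eq_zero_or_one (ZMod.castHom_surjective hdvd) hker,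
    ZMod.forall_eq_zero_or_one_or_neg_one_iff, ZMod.forall_eq_zero_or_one_iff]
  omega
end

section
/- If R is a nontrivial commutative ring with unity, then the polynomial ring R[x] is not weak nil clean; in fact, the polynomial x cannot be written as n + e or n - e with n nilpotent and e idempotent in R[x]. -/
section ReducedImage

variable {A B : Type*} [Ring A] [Ring B] [IsReduced B] (f : A →+* B) {n e : A}

theorem isIdempotentElem_map_add_of_isNilpotent (hn : IsNilpotent n) (he : IsIdempotentElem e) :
    IsIdempotentElem (f (n + e)) := by
  rw [map_add, (hn.map f).eq_zero, zero_add]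
  exact he.map f

theorem isIdempotentElem_neg_map_sub_of_isNilpotent (hn : IsNilpotent n)
    (he : IsIdempotentElem e) : IsIdempotentElem (-f (n - e)) := by
  rw [map_sub, (hn.map f).eq_zero, zero_sub, neg_neg]
  exact he.map f

end ReducedImage

namespace Polynomial

theorem not_isIdempotentElem_X {R : Type*} [Semiring R] [Nontrivial R] :
    ¬ IsIdempotentElem (X : R[X]) := fun h => by
  simpa [← pow_two] using congrArg natDegree h.eq

theorem not_isIdempotentElem_neg_X {R : Type*} [Ring R] [Nontrivial R] :
    ¬ IsIdempotentElem (-X : R[X]) := fun h => by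
  simpa [← pow_two] using congrArg natDegree h.eq

theorem X_ne_isNilpotent_add_and_sub_isIdempotentElem {R : Type*} [CommRing R] [Nontrivial R]
    {n e : R[X]} (hn : IsNilpotent n) (he : IsIdempotentElem e) : X ≠ n + e ∧ X ≠ n - e := by
  obtain ⟨m, hm⟩ := Ideal.exists_maximal R
  let f : R[X] →+* (R ⧸ m)[X] := mapRingHom (Ideal.Quotient.mk m)
  have hfX : f X = X := map_X _
  constructor
  · intro h
    apply not_isIdempotentElem_X (R := R ⧸ m)
    simpa [← h, hfX] using isIdempotentElem_map_add_of_isNilpotent f hn he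
  · intro h
    apply not_isIdempotentElem_neg_X (R := R ⧸ m)
    simpa [← h, hfX] using isIdempotentElem_neg_map_sub_of_isNilpotent f hn he

end Polynomial

theorem stmt_8 {R : Type*} [CommRing R] [Nontrivial R] :
    ¬ WeakNilClean (Polynomial R) ∧
      ∀ n e : Polynomial R, IsNilpotent n → IsIdempotentElem e →
        Polynomial.X ≠ n + e ∧ Polynomial.X ≠ n - e := by
  refine ⟨fun h => ?_, fun n e hn he => Polynomial.X_ne_isNilpotent_add_and_sub_isIdempotentElem hn he⟩
  obtain ⟨n, e, hn, he, hX⟩ := h Polynomial.X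
  have key := Polynomial.X_ne_isNilpotent_add_and_sub_isIdempotentElem hn he
  exact hX.elim key.1 key.2
end

section
/- Let R be a ring and let x ∈ R have a weak* nil clean decomposition, i.e., x = n + e or x = n - e where n is nilpotent, e is idempotent, and ne = en. Then for every r ∈ R: if rx = 0 then re = 0, and if xr = 0 then er = 0. (That is, the left annihilator of x is contained in the left annihilator of e, and likewise on the right.) -/
/-!
Writing `x = n ± e` with `n` nilpotent and commuting with the idempotent `e`, one gets
`x * e = e * x = e * (n ± 1)`, and `n ± 1` is a unit. So `r * x = 0` gives
`r * e * (n ± 1) = r * x * e = 0`, and cancelling the unit leaves `r * e = 0`; symmetrically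
on the right.
-/

section SemiconjBy

variable {M₀ : Type*} [MonoidWithZero M₀] {e u x : M₀}

theorem SemiconjBy.mul_eq_zero_of_mul_eq_zero_left (h : SemiconjBy e u x) (hu : IsUnit u)
    {r : M₀} (hrx : r * x = 0) : r * e = 0 := by
  rw [← hu.mul_left_eq_zero, mul_assoc, h.eq, ← mul_assoc, hrx, zero_mul]

theorem SemiconjBy.mul_eq_zero_of_mul_eq_zero_right (h : SemiconjBy e x u) (hu : IsUnit u)
    {r : M₀} (hxr : x * r = 0) : e * r = 0 := by
  rw [← hu.mul_right_eq_zero, ← mul_assoc, ← h.eq, mul_assoc, hxr, mul_zero]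

end SemiconjBy

section Idempotent

variable {R : Type*} [Ring R] {n e : R}

theorem IsIdempotentElem.semiconjBy_add_one (he : IsIdempotentElem e) (hne : Commute n e) :
    SemiconjBy e (n + 1) (n + e) ∧ SemiconjBy e (n + e) (n + 1) := by
  constructor
  · rw [SemiconjBy, mul_add, add_mul, he.eq, mul_one, hne.eq]
  · rw [SemiconjBy, mul_add, add_mul, he.eq, one_mul, hne.eq]

theorem IsIdempotentElem.semiconjBy_sub_one (he : IsIdempotentElem e) (hne : Commute n e) :
    SemiconjBy e (n - 1) (n - e) ∧ SemiconjBy e (n - e) (n - 1) := by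
  constructor
  · rw [SemiconjBy, mul_sub, sub_mul, he.eq, mul_one, hne.eq]
  · rw [SemiconjBy, mul_sub, sub_mul, he.eq, one_mul, hne.eq]

end Idempotent

theorem stmt_9 {R : Type*} [Ring R] (x n e : R)
    (hn : IsNilpotent n) (he : IsIdempotentElem e) (hcomm : n * e = e * n)
    (hx : x = n + e ∨ x = n - e) :
    ∀ r : R, (r * x = 0 → r * e = 0) ∧ (x * r = 0 → e * r = 0) := by
  obtain ⟨u, hu, hux, hxu⟩ : ∃ u, IsUnit u ∧ SemiconjBy e u x ∧ SemiconjBy e x u := by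
    rcases hx with rfl | rfl
    · exact ⟨n + 1, hn.isUnit_add_one, he.semiconjBy_add_one hcomm⟩
    · exact ⟨n - 1, hn.isUnit_sub_one, he.semiconjBy_sub_one hcomm⟩
  exact fun r =>
    ⟨hux.mul_eq_zero_of_mul_eq_zero_left hu, hxu.mul_eq_zero_of_mul_eq_zero_right hu⟩
end

section
/- Let R be a ring, f ∈ R an idempotent, and x ∈ R with x = fxf. Then x has a weak* nil clean decomposition in R (i.e., x = n + e or x = n - e with n nilpotent, e idempotent, ne = en) if and only if x has such a decomposition inside the corner ring fRf, i.e., there exist n, e ∈ R with fnf = n, fef = e, n nilpotent, e² = e, ne = en, and x = n + e or x = n - e. -/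
/-!
If `x = n ± e` with `n` nilpotent, `e` idempotent and `ne = en`, then `x - x²` (resp. `-x - x²`)
is nilpotent. Whenever `x - x²` is nilpotent, the idempotent `1 - (1 - xᵐ)ᵐ` (for large `m`)
differs from `x` by a nilpotent and commutes with everything commuting with `x`, in particular
with `f`. An idempotent commuting with `f` that is congruent to `x ∈ fRf` modulo a commuting
nilpotent lies in `fRf`, so the decomposition can be taken inside the corner ring.
-/

open Polynomial

theorem sub_sq_dvd_sub_one_sub_one_sub_pow_pow {S : Type*} [CommRing S] (a : S) {n : ℕ}
    (hn : n ≠ 0) : a - a ^ 2 ∣ a - (1 - (1 - a ^ n) ^ n) := by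
  have ha : IsIdempotentElem (Ideal.Quotient.mk (Ideal.span {a - a ^ 2}) a) := by
    rw [IsIdempotentElem, ← sq, eq_comm, ← sub_eq_zero, ← map_pow, ← map_sub,
      Ideal.Quotient.eq_zero_iff_mem]
    exact Ideal.mem_span_singleton_self _
  refine Ideal.mem_span_singleton.mp (Ideal.Quotient.eq_zero_iff_mem.mp ?_)
  simp only [map_sub, map_one, map_pow, ha.pow_eq hn, ha.one_sub.pow_eq hn, sub_sub_cancel,
    sub_self]

theorem exists_isIdempotentElem_isNilpotent_sub {R : Type*} [Ring R] {x : R}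
    (hx : IsNilpotent (x - x ^ 2)) :
    ∃ e : R, IsIdempotentElem e ∧ IsNilpotent (x - e) ∧ ∀ y, Commute x y → Commute e y := by
  obtain ⟨m, hm⟩ := hx
  have hm' : (x - x ^ 2) ^ (m + 1) = 0 := by rw [pow_succ, hm, zero_mul]
  refine ⟨1 - (1 - x ^ (m + 1)) ^ (m + 1), isIdempotentElem_one_sub_one_sub_pow_pow x _ hm',
    ?_, fun y hxy ↦ ?_⟩
  · obtain ⟨q, hq⟩ := sub_sq_dvd_sub_one_sub_one_sub_pow_pow (X : ℤ[X]) m.succ_ne_zero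
    have hxq := congr_arg (aeval x) hq
    have hc := (Commute.all (X - X ^ 2 : ℤ[X]) q).map (aeval x)
    simp only [map_sub, map_mul, map_pow, map_one, aeval_X] at hxq hc
    exact hxq ▸ hc.isNilpotent_mul_right ⟨m + 1, hm'⟩
  · exact (Commute.one_left y).sub_left
      (((Commute.one_left y).sub_left (hxy.pow_left _)).pow_left _)

theorem IsIdempotentElem.mul_eq_self_of_isNilpotent_sub {R : Type*} [Ring R] {e f x : R}
    (he : IsIdempotentElem e) (hf : IsIdempotentElem f) (hef : Commute e f)
    (hxf : Commute x f) (hx : x * f = x) (hex : IsNilpotent (e - x)) : e * f = e := by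
  -- `e` and `e * f` are commuting idempotents differing by the nilpotent `(e - x) * (1 - f)`.
  have hc : Commute (e - x) (1 - f) := (Commute.one_right _).sub_right (hef.sub_left hxf)
  have hsub : e - e * f = (e - x) * (1 - f) := by
    rw [mul_one_sub, sub_mul, hx]; abel
  refine (eq_of_isNilpotent_sub_of_isIdempotentElem_of_commute he (he.mul_of_commute hef hf) ?_
    ((Commute.refl e).mul_right hef)).symm
  exact hsub ▸ hc.isNilpotent_mul_right hex

theorem Commute.isNilpotent_add_sub_sq {R : Type*} [Ring R] {n e : R} (hne : Commute n e)
    (hn : IsNilpotent n) (he : IsIdempotentElem e) : IsNilpotent (n + e - (n + e) ^ 2) := by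
  have h : n + e - (n + e) ^ 2 = n * (1 - n - (e + e)) := by
    rw [sq, add_mul, mul_add, mul_add, he.eq, ← hne.eq]; noncomm_ring
  rw [h]
  exact (((Commute.one_right n).sub_right (Commute.refl n)).sub_right
    (hne.add_right hne)).isNilpotent_mul_right hn

theorem exists_corner_eq_add_of_eq_add {R : Type*} [Ring R] {f x n e : R}
    (hf : IsIdempotentElem f) (hx : f * x * f = x) (hn : IsNilpotent n)
    (he : IsIdempotentElem e) (hne : Commute n e) (hxne : x = n + e) :
    ∃ n' e' : R, f * n' * f = n' ∧ f * e' * f = e' ∧ IsNilpotent n' ∧ IsIdempotentElem e' ∧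
      Commute n' e' ∧ x = n' + e' := by
  have hfx : f * x = x := by rw [← hx, ← mul_assoc, ← mul_assoc, hf.eq]
  have hxf : x * f = x := by rw [← hx, mul_assoc, hf.eq]
  have hxf' : Commute x f := hxf.trans hfx.symm
  obtain ⟨e', he', hxe', hcomm⟩ :=
    exists_isIdempotentElem_isNilpotent_sub (hxne ▸ hne.isNilpotent_add_sub_sq hn he)
  have hef : Commute e' f := hcomm f hxf'
  have hef' : e' * f = e' := he'.mul_eq_self_of_isNilpotent_sub hf hef hxf' hxf
    (by simpa only [neg_sub] using hxe'.neg)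
  have hfef : f * e' * f = e' := by rw [← hef.eq, hef', hef']
  refine ⟨x - e', e', ?_, hfef, hxe', he', (hcomm x (.refl x)).symm.sub_left (.refl e'),
    (sub_add_cancel x e').symm⟩
  rw [mul_sub, sub_mul, hx, hfef]

theorem stmt_10 {R : Type*} [Ring R] (f : R) (hf : IsIdempotentElem f)
    (x : R) (hx : x = f * x * f) :
    (∃ n e : R, IsNilpotent n ∧ IsIdempotentElem e ∧ n * e = e * n ∧
        (x = n + e ∨ x = n - e)) ↔
      (∃ n e : R, f * n * f = n ∧ f * e * f = e ∧ IsNilpotent n ∧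
        IsIdempotentElem e ∧ n * e = e * n ∧ (x = n + e ∨ x = n - e)) := by
  refine ⟨?_, fun ⟨n, e, _, _, h⟩ ↦ ⟨n, e, h⟩⟩
  rintro ⟨n, e, hn, he, hne, hxne | hxne⟩
  · obtain ⟨n', e', hfn', hfe', hn', he', hne', hx'⟩ :=
      exists_corner_eq_add_of_eq_add hf hx.symm hn he hne hxne
    exact ⟨n', e', hfn', hfe', hn', he', hne', Or.inl hx'⟩
  · obtain ⟨n', e', hfn', hfe', hn', he', hne', hx'⟩ :=
      exists_corner_eq_add_of_eq_add (x := -x) hf (by rw [mul_neg, neg_mul, ← hx]) hn.neg he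
        (Commute.neg_left hne) (by rw [hxne, neg_sub, sub_eq_neg_add])
    refine ⟨-n', e', by rw [mul_neg, neg_mul, hfn'], hfe', hn'.neg, he', Commute.neg_left hne', Or.inr ?_⟩
    rw [← neg_neg x, hx', neg_add', sub_eq_add_neg]
end

section
/- Let R be a nontrivial ring with unity such that every element r ∈ R satisfies: r is nilpotent, or r - 1 is nilpotent, or r + 1 is nilpotent (i.e., R is {0,1}-weak nil clean). Then R is a local ring, i.e., R has exactly one maximal ideal. -/
/-!
Every non-unit `a` is nilpotent: otherwise `a - 1` or `a + 1` is nilpotent, and then `a` is a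
unit. A nilpotent element has no left inverse, so a left invertible element is a unit; hence
`c * a` is a non-unit whenever `a` is, and if `a + b = u` is a unit then `1 - u⁻¹ a = u⁻¹ b` is
a unit. The non-units thus form a proper left ideal, which contains every proper left ideal and
is therefore the unique maximal one.
-/

def IsZeroOneWeakNilClean (R : Type*) [Ring R] : Prop :=
  ∀ r : R, IsNilpotent r ∨ IsNilpotent (r - 1) ∨ IsNilpotent (r + 1)

theorem IsNilpotent.mul_ne_one {R : Type*} [Ring R] [Nontrivial R] {a : R}
    (ha : IsNilpotent a) (b : R) : b * a ≠ 1 := by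
  intro hba
  obtain ⟨n, hn⟩ := ha
  have hpow : ∀ k : ℕ, b ^ k * a ^ k = 1 := by
    intro k
    induction k with
    | zero => simp
    | succ k ih =>
      rw [_root_.pow_succ, _root_.pow_succ', mul_assoc, ← mul_assoc b, hba, one_mul, ih]
  simpa [hn] using hpow n

namespace IsZeroOneWeakNilClean

variable {R : Type*} [Ring R]

theorem isNilpotent_of_not_isUnit (h : IsZeroOneWeakNilClean R) {a : R} (ha : ¬IsUnit a) :
    IsNilpotent a := by
  rcases h a with hn | hn | hn
  · exact hn
  · exact absurd (by simpa using hn.isUnit_add_one) ha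
  · exact absurd (by simpa using hn.isUnit_sub_one) ha

variable [Nontrivial R]

theorem isUnit_of_mul_eq_one (h : IsZeroOneWeakNilClean R) {a b : R} (hba : b * a = 1) :
    IsUnit a := by
  by_contra ha
  exact (h.isNilpotent_of_not_isUnit ha).mul_ne_one b hba

theorem not_isUnit_mul (h : IsZeroOneWeakNilClean R) {a : R} (ha : ¬IsUnit a) (c : R) :
    ¬IsUnit (c * a) := by
  rintro ⟨u, hu⟩
  exact ha (h.isUnit_of_mul_eq_one (b := ↑u⁻¹ * c) (by rw [mul_assoc, ← hu, u.inv_mul]))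

theorem not_isUnit_add (h : IsZeroOneWeakNilClean R) {a b : R} (ha : ¬IsUnit a)
    (hb : ¬IsUnit b) : ¬IsUnit (a + b) := by
  rintro ⟨u, hu⟩
  have hsum : ↑u⁻¹ * b = 1 - ↑u⁻¹ * a := by
    rw [eq_sub_iff_add_eq, ← mul_add, add_comm, ← hu, u.inv_mul]
  have hunit : IsUnit (↑u⁻¹ * b) :=
    hsum ▸ (h.isNilpotent_of_not_isUnit (h.not_isUnit_mul ha _)).isUnit_one_sub
  exact hb ((Units.isUnit_units_mul _ _).mp hunit)

def nonunitsIdeal (h : IsZeroOneWeakNilClean R) : Ideal R where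
  carrier := nonunits R
  zero_mem' := zero_mem_nonunits.mpr zero_ne_one
  add_mem' := h.not_isUnit_add
  smul_mem' c _ ha := h.not_isUnit_mul ha c

theorem nonunitsIdeal_ne_top (h : IsZeroOneWeakNilClean R) : h.nonunitsIdeal ≠ ⊤ :=
  (Ideal.ne_top_iff_one _).mpr one_notMem_nonunits

theorem eq_nonunitsIdeal_of_isMaximal (h : IsZeroOneWeakNilClean R) {I : Ideal R}
    (hI : I.IsMaximal) : I = h.nonunitsIdeal :=
  hI.eq_of_le h.nonunitsIdeal_ne_top (coe_subset_nonunits hI.ne_top)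

end IsZeroOneWeakNilClean

theorem stmt_12 {R : Type*} [Ring R] [Nontrivial R]
    (h : ∀ r : R, IsNilpotent r ∨ IsNilpotent (r - 1) ∨ IsNilpotent (r + 1)) :
    ∃! I : Ideal R, I.IsMaximal := by
  have hR : IsZeroOneWeakNilClean R := h
  obtain ⟨I, hI⟩ := Ideal.exists_maximal R
  refine ⟨I, hI, fun J hJ => ?_⟩
  rw [hR.eq_nonunitsIdeal_of_isMaximal hI, hR.eq_nonunitsIdeal_of_isMaximal hJ]
end

section
/- Let R be a ring and S a set of idempotents of R such that every element r ∈ R can be written as r = n + e or r = n - e with n nilpotent, e ∈ S, and ne = en (i.e., R is S-weak* nil clean). Then S is the set of all idempotents of R, i.e., every idempotent of R belongs to S. -/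
/-!
Write an idempotent `f` as `f = n ± e` with `e ∈ S` idempotent and `n` nilpotent commuting with
`e`; then `f` and `e` commute as well. Two commuting idempotents whose difference is nilpotent are
equal, and `f - e` is nilpotent in both cases: it is `n` itself when `f = n + e`, and when
`f = n - e` it equals `(f + e) * (f - e) = n * (f - e)`. Hence `f = e ∈ S`.
-/

theorem IsIdempotentElem.isNilpotent_sub_of_isNilpotent_add {R : Type*} [Ring R] {e f : R}
    (hf : IsIdempotentElem f) (he : IsIdempotentElem e) (hfe : Commute f e)
    (h : IsNilpotent (f + e)) : IsNilpotent (f - e) := by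
  have hmul : (f + e) * (f - e) = f - e := by
    rw [add_mul, mul_sub, mul_sub, hf.eq, he.eq, ← hfe.eq]
    abel
  have hcomm : Commute (f + e) (f - e) :=
    ((Commute.refl f).add_left hfe.symm).sub_right (hfe.add_left (.refl e))
  rw [← hmul]
  exact hcomm.isNilpotent_mul_right h

theorem stmt_13 {R : Type*} [Ring R] (S : Set R)
    (hS : ∀ e ∈ S, IsIdempotentElem e)
    (h : ∀ r : R, ∃ n e : R, e ∈ S ∧ IsNilpotent n ∧ n * e = e * n ∧
      (r = n + e ∨ r = n - e)) :
    ∀ e : R, IsIdempotentElem e → e ∈ S := by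
  intro f hf
  obtain ⟨n, e, heS, hn, hne, hsum⟩ := h f
  have he : IsIdempotentElem e := hS e heS
  have hfe : Commute f e := by
    rcases hsum with rfl | rfl
    exacts [Commute.add_left hne (.refl e), Commute.sub_left hne (.refl e)]
  suffices f = e by rwa [this]
  refine eq_of_isNilpotent_sub_of_isIdempotentElem_of_commute hf he ?_ hfe
  rcases hsum with rfl | rfl
  · rwa [add_sub_cancel_right]
  · exact hf.isNilpotent_sub_of_isNilpotent_add he hfe (by rwa [sub_add_cancel])
end

section
/- Let R be a weak* nil clean ring. Then R is an exchange ring; more precisely, for every x ∈ R there exist an idempotent f ∈ R and an element r ∈ R such that x - f = r·(x - x²). -/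
/-- A ring is weak* nil clean if every element is the sum or difference of a
nilpotent and an idempotent which commute with each other. -/
def WeakStarNilClean (R : Type*) [Ring R] : Prop :=
  ∀ x : R, ∃ n e : R, IsNilpotent n ∧ IsIdempotentElem e ∧ n * e = e * n ∧
    (x = n + e ∨ x = n - e)

/-!
Take `f = e`. Commutation of `n` and `e` makes `x - x²` a unit multiple of `x - e`:
if `x = n + e` then `x - x² = (1 - 2e - n) n`, where `1 - 2e` squares to `1` and a unit minus a
commuting nilpotent is a unit; if `x = n - e` then `x - x² = (1 - n)(x - e)`.
-/

section

variable {R : Type*} [Ring R] {n e : R}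

theorem IsIdempotentElem.isUnit_one_sub_two_mul (he : IsIdempotentElem e) :
    IsUnit (1 - 2 * e) :=
  IsUnit.of_pow_eq_one (n := 2) (by
    simp only [sq, two_mul, sub_mul, mul_sub, add_mul, mul_add, one_mul, mul_one, he.eq]
    abel) two_ne_zero

theorem add_sub_add_sq_eq_mul (he : IsIdempotentElem e) (hc : Commute n e) :
    (n + e) - (n + e) ^ 2 = (1 - 2 * e - n) * n := by
  simp only [sq, two_mul, add_mul, mul_add, sub_mul, one_mul, he.eq, hc.eq]
  abel

theorem sub_sub_sub_sq_eq_mul (he : IsIdempotentElem e) (hc : Commute n e) :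
    (n - e) - (n - e) ^ 2 = (1 - n) * (n - e - e) := by
  simp only [sq, sub_mul, mul_sub, one_mul, he.eq, hc.eq]
  abel

theorem exists_add_sub_eq_mul_sub_sq (hn : IsNilpotent n) (he : IsIdempotentElem e)
    (hc : Commute n e) : ∃ r, n + e - e = r * ((n + e) - (n + e) ^ 2) := by
  have hu : IsUnit (1 - 2 * e - n) := by
    rw [sub_eq_add_neg (1 - 2 * e)]
    refine hn.neg.isUnit_add_left_of_commute he.isUnit_one_sub_two_mul ?_
    exact ((Commute.one_right n).sub_right ((Commute.ofNat_left 2 n).symm.mul_right hc)).neg_left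
  obtain ⟨u, hu⟩ := hu
  refine ⟨↑u⁻¹, ?_⟩
  rw [add_sub_add_sq_eq_mul he hc, ← hu, u.inv_mul_cancel_left, add_sub_cancel_right]

theorem exists_sub_sub_eq_mul_sub_sq (hn : IsNilpotent n) (he : IsIdempotentElem e)
    (hc : Commute n e) : ∃ r, n - e - e = r * ((n - e) - (n - e) ^ 2) := by
  obtain ⟨u, hu⟩ := hn.isUnit_one_sub
  exact ⟨↑u⁻¹, by rw [sub_sub_sub_sq_eq_mul he hc, ← hu, u.inv_mul_cancel_left]⟩

end

theorem stmt_14 {R : Type*} [Ring R] (hR : WeakStarNilClean R) :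
    ∀ x : R, ∃ f r : R, IsIdempotentElem f ∧ x - f = r * (x - x ^ 2) := by
  intro x
  obtain ⟨n, e, hn, he, hc, rfl | rfl⟩ := hR x
  · obtain ⟨r, hr⟩ := exists_add_sub_eq_mul_sub_sq hn he hc
    exact ⟨e, r, he, hr⟩
  · obtain ⟨r, hr⟩ := exists_sub_sub_eq_mul_sub_sq hn he hc
    exact ⟨e, r, he, hr⟩
end

section
/- A ring R is strongly nil clean (every element a ∈ R can be written as a = n + e with n nilpotent, e idempotent, and ne = en) if and only if R is weak* nil clean and the element 2 = 1 + 1 is nilpotent in R. -/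
/-- A ring is strongly nil clean if every element is the sum of a nilpotent and an
idempotent which commute with each other. -/
def StronglyNilClean (R : Type*) [Ring R] : Prop :=
  ∀ a : R, ∃ n e : R, IsNilpotent n ∧ IsIdempotentElem e ∧ n * e = e * n ∧ a = n + e

/-! If `2` is nilpotent, `n - e = (n - 2e) + e` turns a "difference" decomposition into a
"sum" one. Conversely, `-1 = n + e` forces the idempotent `e = -(1 + n)` to be a unit, hence
`e = 1` and `2 = -n` is nilpotent. -/

theorem isNilpotent_two_of_neg_one_eq_add {R : Type*} [Ring R] {n e : R}
    (hn : IsNilpotent n) (he : IsIdempotentElem e) (h : -1 = n + e) :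
    IsNilpotent (2 : R) := by
  have he_eq : e = -(1 + n) := by rw [eq_sub_of_add_eq' h.symm]; abel
  have he_one : e = 1 :=
    (IsIdempotentElem.iff_eq_one_of_isUnit (he_eq ▸ hn.isUnit_one_add.neg)).mp he
  have hn_eq : n = -2 := by rw [eq_sub_of_add_eq h.symm, he_one]; norm_num
  exact isNilpotent_neg_iff.mp (hn_eq ▸ hn)

theorem exists_sub_eq_add_of_isNilpotent_two {R : Type*} [Ring R] {n e : R}
    (h2 : IsNilpotent (2 : R)) (hn : IsNilpotent n) (hne : Commute n e) :
    ∃ m : R, IsNilpotent m ∧ Commute m e ∧ n - e = m + e := by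
  have h2e_comm : Commute (2 * e) e := (Commute.ofNat_left 2 e).mul_left (Commute.refl e)
  refine ⟨n - 2 * e, ?_, hne.sub_left h2e_comm, by rw [two_mul]; abel⟩
  exact ((Commute.ofNat_right n 2).mul_right hne).isNilpotent_sub hn
    ((Commute.ofNat_left 2 e).isNilpotent_mul_right h2)

theorem stmt_15 {R : Type*} [Ring R] :
    StronglyNilClean R ↔ WeakStarNilClean R ∧ IsNilpotent (2 : R) := by
  constructor
  · intro h
    refine ⟨fun x => ?_, ?_⟩
    · obtain ⟨n, e, hn, he, hne, rfl⟩ := h x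
      exact ⟨n, e, hn, he, hne, Or.inl rfl⟩
    · obtain ⟨n, e, hn, he, -, h⟩ := h (-1)
      exact isNilpotent_two_of_neg_one_eq_add hn he h
  · rintro ⟨hw, h2⟩ a
    obtain ⟨n, e, hn, he, hne, rfl | rfl⟩ := hw a
    · exact ⟨n, e, hn, he, hne, rfl⟩
    · obtain ⟨m, hm, hme, h⟩ := exists_sub_eq_add_of_isNilpotent_two h2 hn hne
      exact ⟨m, e, hm, he, hme, h⟩
end

section
/- Let R be a weak* nil clean ring in which the element 2 = 1 + 1 is nilpotent. Then R is strongly π-regular: for every a ∈ R there exist a natural number k ≥ 1 and elements b, c ∈ R such that a^k = a^(k+1)·b and a^k = c·a^(k+1). -/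
section StronglyPiRegular

variable {R : Type*} [Ring R]

def IsStronglyPiRegularElem (a : R) : Prop :=
  ∃ k : ℕ, 1 ≤ k ∧ ∃ b c : R, a ^ k = a ^ (k + 1) * b ∧ a ^ k = c * a ^ (k + 1)

theorem isStronglyPiRegularElem_of_pow_succ_eq_pow_mul_unit {a : R} {u : Rˣ} {k : ℕ}
    (hk : 1 ≤ k) (hau : Commute a u) (h : a ^ (k + 1) = a ^ k * u) :
    IsStronglyPiRegularElem a := by
  have hright : a ^ k = a ^ (k + 1) * ↑u⁻¹ := by rw [h, Units.mul_inv_cancel_right]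
  refine ⟨k, hk, ↑u⁻¹, ↑u⁻¹, hright, ?_⟩
  rw [hright, (hau.units_inv_right.pow_left (k + 1)).eq]

theorem add_pow_mul_one_sub {n e : R} (he : IsIdempotentElem e) (hne : Commute n e) (k : ℕ) :
    (n + e) ^ k * (1 - e) = n ^ k * (1 - e) := by
  have hcomm : Commute n (1 - e) := (Commute.one_right n).sub_right hne
  have hstep : (n + e) * (1 - e) = n * (1 - e) := by
    rw [add_mul, he.mul_one_sub_self, add_zero]
  induction k with
  | zero => rw [pow_zero, pow_zero]
  | succ k ih =>
    calc (n + e) ^ (k + 1) * (1 - e) = (n + e) ^ k * (1 - e) * n := by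
          rw [pow_succ, mul_assoc, hstep, hcomm.eq, mul_assoc]
      _ = n ^ (k + 1) * (1 - e) := by rw [ih, mul_assoc, ← hcomm.eq, ← mul_assoc, pow_succ]

theorem add_pow_succ_eq_pow_mul_one_add {n e : R} (he : IsIdempotentElem e) (hne : Commute n e)
    {k : ℕ} (hk : n ^ k = 0) : (n + e) ^ (k + 1) = (n + e) ^ k * (1 + n) := by
  have hkill : (n + e) ^ k * (1 - e) = 0 := by rw [add_pow_mul_one_sub he hne, hk, zero_mul]
  rw [eq_comm, ← sub_eq_zero, pow_succ, ← mul_sub, ← hkill]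
  congr 1
  abel

theorem isStronglyPiRegularElem_add {n e : R} (hn : IsNilpotent n) (he : IsIdempotentElem e)
    (hne : Commute n e) : IsStronglyPiRegularElem (n + e) := by
  obtain ⟨u, hu⟩ := hn.isUnit_one_add
  obtain ⟨k, hk⟩ := hn
  have hk' : n ^ (k + 1) = 0 := by rw [pow_succ, hk, zero_mul]
  refine isStronglyPiRegularElem_of_pow_succ_eq_pow_mul_unit (u := u) (k := k + 1)
    le_add_self ?_ ?_
  · rw [hu]
    exact (Commute.one_right _).add_right ((Commute.refl n).add_left hne.symm)
  · rw [hu]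
    exact add_pow_succ_eq_pow_mul_one_add he hne hk'

theorem isStronglyPiRegularElem_sub {n e : R} (h2 : IsNilpotent (2 : R)) (hn : IsNilpotent n)
    (he : IsIdempotentElem e) (hne : Commute n e) : IsStronglyPiRegularElem (n - e) := by
  have htwo : Commute n (2 * e) := (Commute.ofNat_right n 2).mul_right hne
  have hsub : n - e = (n - 2 * e) + e := by rw [two_mul]; abel
  rw [hsub]
  exact isStronglyPiRegularElem_add (htwo.isNilpotent_sub hn
    ((Commute.ofNat_left 2 e).isNilpotent_mul_right h2)) he
    (hne.sub_left ((Commute.ofNat_left 2 e).mul_left (Commute.refl e)))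

end StronglyPiRegular

theorem stmt_16 {R : Type*} [Ring R] (hR : WeakStarNilClean R)
    (h2 : IsNilpotent (2 : R)) :
    ∀ a : R, ∃ k : ℕ, 1 ≤ k ∧ ∃ b c : R,
      a ^ k = a ^ (k + 1) * b ∧ a ^ k = c * a ^ (k + 1) := by
  intro a
  obtain ⟨n, e, hn, he, hne, rfl | rfl⟩ := hR a
  · exact isStronglyPiRegularElem_add hn he hne
  · exact isStronglyPiRegularElem_sub h2 hn he hne
end

section
/- Let R be a ring and a ∈ R a weak* J-clean element, i.e., a = w + e or a = w - e for some w in the Jacobson radical J(R) and some idempotent e with ae = ea. Then a is strongly clean: there exist an idempotent f ∈ R and a unit u ∈ R such that a = f + u and fu = uf. -/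
/-!
Take `f = 1 - e` and `u = a - f`. Since `f` commutes with `a` it commutes with `u`, and `u` is
`w + (2e - 1)` or `w - 1`: a unit (note `(2e - 1)² = 1`) plus an element of the Jacobson radical,
hence a unit.
-/

namespace Ideal

variable {R : Type*} [Ring R] {x u : R}

theorem exists_mul_one_add_eq_one_of_mem_jacobson_bot (hx : x ∈ jacobson (⊥ : Ideal R)) :
    ∃ z, z * (1 + x) = 1 := by
  obtain ⟨z, hz⟩ := mem_jacobson_iff.1 hx 1
  refine ⟨z, ?_⟩
  rw [mem_bot, mul_one, sub_eq_zero] at hz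
  rw [mul_one_add, add_comm, hz]

/-- `jacobson ⊥` is the intersection of the maximal *left* ideals, so membership a priori only
gives left inverses; applying this to the left inverse itself upgrades it to a two-sided one. -/
theorem isUnit_one_add_of_mem_jacobson_bot (hx : x ∈ jacobson (⊥ : Ideal R)) :
    IsUnit (1 + x) := by
  obtain ⟨z, hz⟩ := exists_mul_one_add_eq_one_of_mem_jacobson_bot hx
  have hz_eq : z = 1 + -(z * x) := by rw [← sub_eq_add_neg, eq_sub_iff_add_eq, ← mul_one_add, hz]
  obtain ⟨z', hz'⟩ := exists_mul_one_add_eq_one_of_mem_jacobson_bot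
    (neg_mem (mul_mem_left _ z hx))
  rw [← hz_eq] at hz'
  have h_inv : z' = 1 + x := left_inv_eq_right_inv hz' hz
  exact ⟨⟨1 + x, z, h_inv ▸ hz', hz⟩, rfl⟩

theorem isUnit_add_of_mem_jacobson_bot (hx : x ∈ jacobson (⊥ : Ideal R)) (hu : IsUnit u) :
    IsUnit (x + u) := by
  obtain ⟨u, rfl⟩ := hu
  have h : x + u = u * (1 + ↑u⁻¹ * x) := by rw [mul_one_add, Units.mul_inv_cancel_left, add_comm]
  rw [h]
  exact u.isUnit.mul (isUnit_one_add_of_mem_jacobson_bot (mul_mem_left _ _ hx))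

end Ideal

theorem IsIdempotentElem.isUnit_two_mul_sub_one {R : Type*} [Ring R] {e : R}
    (he : IsIdempotentElem e) : IsUnit (2 * e - 1) := by
  have h : (2 * e - 1) * (2 * e - 1) = 1 := by
    calc (2 * e - 1) * (2 * e - 1) = 4 * (e * e) - 4 * e + 1 := by noncomm_ring
      _ = 1 := by rw [he.eq]; noncomm_ring
  exact ⟨⟨_, _, h, h⟩, rfl⟩

theorem stmt_17 {R : Type*} [Ring R] (a w e : R)
    (hw : w ∈ Ideal.jacobson (⊥ : Ideal R)) (he : IsIdempotentElem e)
    (hcomm : a * e = e * a) (ha : a = w + e ∨ a = w - e) :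
    ∃ f u : R, IsIdempotentElem f ∧ IsUnit u ∧ a = f + u ∧ f * u = u * f := by
  have hf : Commute (1 - e) a := (Commute.one_left a).sub_left hcomm.symm
  refine ⟨1 - e, a - (1 - e), he.one_sub, ?_, (add_sub_cancel _ _).symm,
    (hf.sub_right (Commute.refl _)).eq⟩
  rcases ha with rfl | rfl
  · have h : w + e - (1 - e) = w + (2 * e - 1) := by noncomm_ring
    exact h ▸ Ideal.isUnit_add_of_mem_jacobson_bot hw he.isUnit_two_mul_sub_one
  · have h : w - e - (1 - e) = w + -1 := by noncomm_ring
    exact h ▸ Ideal.isUnit_add_of_mem_jacobson_bot hw isUnit_one.neg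
end

section
/- Let R be a weak* J-clean ring (every a ∈ R can be written as a = w + e or a = w - e with w ∈ J(R), e idempotent, and ae = ea) such that R/J(R) is Boolean. Then R is J-clean: every a ∈ R can be written as a = f + w with f idempotent and w ∈ J(R). -/
/-! When `R/J(R)` is Boolean, `(-1)² - (-1) = 2` lies in `J(R)`, so a decomposition
`a = w - e` can be rewritten as `a = e + (w - 2e)` with `w - 2e ∈ J(R)`. -/

/-- A ring is weak* J-clean if every element is the sum or difference of an element
of the Jacobson radical and an idempotent commuting with the given element. -/
def WeakStarJClean (R : Type*) [Ring R] : Prop :=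
  ∀ a : R, ∃ w e : R, w ∈ Ideal.jacobson (⊥ : Ideal R) ∧ IsIdempotentElem e ∧
    a * e = e * a ∧ (a = w + e ∨ a = w - e)

section

variable {R : Type*} [Ring R] {I : Ideal R}

theorem Ideal.two_mem_of_forall_mul_self_sub_mem (h : ∀ x : R, x * x - x ∈ I) :
    (2 : R) ∈ I := by
  simpa [one_add_one_eq_two] using h (-1)

theorem Ideal.exists_mem_sub_eq_add_of_two_mem (h2 : (2 : R) ∈ I) {w : R} (hw : w ∈ I) (e : R) :
    ∃ v ∈ I, w - e = e + v :=
  ⟨w - e * 2, I.sub_mem hw (I.mul_mem_left e h2), by rw [mul_two]; abel⟩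

end

theorem stmt_19 {R : Type*} [Ring R] (hR : WeakStarJClean R)
    (hbool : ∀ x : R, x * x - x ∈ Ideal.jacobson (⊥ : Ideal R)) :
    ∀ a : R, ∃ f w : R, IsIdempotentElem f ∧ w ∈ Ideal.jacobson (⊥ : Ideal R) ∧
      a = f + w := by
  intro a
  obtain ⟨w, e, hw, he, -, hplus | hminus⟩ := hR a
  · exact ⟨e, w, he, hw, hplus.trans (add_comm w e)⟩
  · obtain ⟨v, hv, hwe⟩ :=
      Ideal.exists_mem_sub_eq_add_of_two_mem (Ideal.two_mem_of_forall_mul_self_sub_mem hbool) hw e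
    exact ⟨e, v, he, hv, hminus.trans hwe⟩
end
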